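/- Let Y ∈ ℝ^{n₁×n₂} have singular value decomposition Y = UΣVᵀ with Σ = diag[σ₁, σ₂, …], and let τ > 0. Then the function Z ↦ (1/2)‖Y − Z‖_F² + τ‖Z‖_* has a unique minimizer over ℝ^{n₁×n₂}, given by the singular value thresholding operator D_τ(Y) = UΣ'Vᵀ, where Σ' = diag[σ'₁, σ'₂, …] with σ'_k = σ_k − τ if σ_k ≥ τ and σ'_k = 0 if σ_k < τ. -/

import Mathlib

open Matrix

noncomputable def frobNorm {n₁ n₂ : ℕ} (A : Matrix (Fin n₁) (Fin n₂) ℝ) : ℝ :=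
  Real.sqrt (∑ i, ∑ j, (A i j) ^ 2)

noncomputable def nuclearNorm {n₁ n₂ : ℕ} (A : Matrix (Fin n₁) (Fin n₂) ℝ) : ℝ :=
  ∑ i, Real.sqrt ((Matrix.isHermitian_conjTranspose_mul_self A).eigenvalues i)

/-!
The thresholded matrix `D` is characterised by the optimality condition `Y - D ∈ τ ∂‖D‖_*`.
Indeed `W := Y - D = U diag(σ - σ') Vᵀ` has operator norm at most `τ`, so trace duality
`⟨W, Z⟩ ≤ ‖W‖ ‖Z‖_*` gives `⟨W, Z⟩ ≤ τ ‖Z‖_*`, while `⟨W, D⟩ = τ ∑ σ'ᵢ ≥ τ ‖D‖_*`.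
Expanding `‖Y - Z‖_F² = ‖W‖_F² - 2 ⟨W, Z - D⟩ + ‖Z - D‖_F²` then shows that the objective at `Z`
exceeds the one at `D` by at least `‖Z - D‖_F² / 2`.

Trace duality is checked in an orthonormal eigenbasis of `ZᵀZ`; the bound `‖D‖_* ≤ ∑ σ'ᵢ` comes
from pairing `D` with its polar factor, which has operator norm at most `1`.
-/

section Frobenius

variable {m n k : Type*} [Fintype m] [Fintype n]

def frobInner (A B : Matrix m n ℝ) : ℝ := (Aᵀ * B).trace

lemma frobInner_eq_sum_dotProduct (A B : Matrix m n ℝ) :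
    frobInner A B = ∑ j, Aᵀ j ⬝ᵥ Bᵀ j :=
  rfl

lemma frobInner_comm (A B : Matrix m n ℝ) : frobInner A B = frobInner B A := by
  rw [frobInner, ← trace_transpose, transpose_mul, transpose_transpose, frobInner]

lemma frobInner_sub_left (A B C : Matrix m n ℝ) :
    frobInner (A - B) C = frobInner A C - frobInner B C := by
  simp only [frobInner, transpose_sub, Matrix.sub_mul, trace_sub]

lemma frobInner_sub_right (A B C : Matrix m n ℝ) :
    frobInner A (B - C) = frobInner A B - frobInner A C := by
  simp only [frobInner, Matrix.mul_sub, trace_sub]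

lemma frobInner_self_pos {A : Matrix m n ℝ} (hA : A ≠ 0) : 0 < frobInner A A :=
  (posSemidef_conjTranspose_mul_self A).trace_nonneg.lt_of_ne'
    (trace_conjTranspose_mul_self_eq_zero_iff.not.mpr hA)

lemma frobInner_mul_of_mul_transpose_eq_one [Fintype k] [DecidableEq n] (A B : Matrix m n ℝ)
    {Q : Matrix n k ℝ} (hQ : Q * Qᵀ = 1) : frobInner (A * Q) (B * Q) = frobInner A B := by
  rw [frobInner, frobInner, transpose_mul, Matrix.mul_assoc, ← Matrix.mul_assoc Aᵀ,
    trace_mul_comm, Matrix.mul_assoc, hQ, Matrix.mul_one]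

lemma frobInner_sub_sub_self (A B : Matrix m n ℝ) :
    frobInner (A - B) (A - B) = frobInner A A - 2 * frobInner A B + frobInner B B := by
  rw [frobInner_sub_left, frobInner_sub_right, frobInner_sub_right, frobInner_comm B A]
  ring

end Frobenius

lemma frobNorm_sq {n₁ n₂ : ℕ} (A : Matrix (Fin n₁) (Fin n₂) ℝ) :
    frobNorm A ^ 2 = frobInner A A := by
  rw [frobNorm, Real.sq_sqrt (by positivity), frobInner, trace, Finset.sum_comm]
  simp [mul_apply, sq]

theorem half_frobNorm_sq_add_lt {n₁ n₂ : ℕ} {Y D Z : Matrix (Fin n₁) (Fin n₂) ℝ} {a b : ℝ}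
    (h : frobInner (Y - D) (Z - D) ≤ b - a) (hZ : Z ≠ D) :
    1 / 2 * frobNorm (Y - D) ^ 2 + a < 1 / 2 * frobNorm (Y - Z) ^ 2 + b := by
  have hpos := frobInner_self_pos (sub_ne_zero.mpr hZ)
  have hexpand : frobNorm (Y - Z) ^ 2
      = frobNorm (Y - D) ^ 2 - 2 * frobInner (Y - D) (Z - D) + frobInner (Z - D) (Z - D) := by
    rw [show Y - Z = (Y - D) - (Z - D) by abel, frobNorm_sq, frobNorm_sq, frobInner_sub_sub_self]
  rw [hexpand]
  linarith

section L2OpNorm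

open WithLp
open scoped Matrix.Norms.L2Operator

variable {m n k : Type*} [Fintype m] [Fintype n]

lemma norm_toLp_sq (v : n → ℝ) : ‖toLp 2 v‖ ^ 2 = v ⬝ᵥ v := by
  rw [← real_inner_self_eq_norm_sq, EuclideanSpace.inner_toLp_toLp, star_trivial]

lemma dotProduct_le_norm_mul_norm (v w : n → ℝ) : v ⬝ᵥ w ≤ ‖toLp 2 v‖ * ‖toLp 2 w‖ := by
  simpa [EuclideanSpace.inner_toLp_toLp, mul_comm] using real_inner_le_norm (toLp 2 w) (toLp 2 v)

lemma mulVec_dotProduct_le [DecidableEq n] (A : Matrix m n ℝ) (x : n → ℝ) (y : m → ℝ) :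
    (A *ᵥ x) ⬝ᵥ y ≤ ‖A‖ * ‖toLp 2 x‖ * ‖toLp 2 y‖ :=
  (dotProduct_le_norm_mul_norm _ _).trans <|
    mul_le_mul_of_nonneg_right (A.l2_opNorm_mulVec (toLp 2 x)) (norm_nonneg _)

lemma norm_toLp_transpose_apply_eq_sqrt [DecidableEq k] {A : Matrix m k ℝ} {s : k → ℝ}
    (hA : Aᵀ * A = diagonal s) (j : k) :
    ‖toLp 2 (Aᵀ j)‖ = √(s j) := by
  have h : Aᵀ j ⬝ᵥ Aᵀ j = s j := by
    have := congrFun (congrFun hA j) j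
    rwa [diagonal_apply_eq] at this
  rw [← h, ← norm_toLp_sq, Real.sqrt_sq (norm_nonneg _)]

lemma norm_toLp_transpose_apply_eq_one [DecidableEq k] {U : Matrix m k ℝ} (hU : Uᵀ * U = 1)
    (j : k) : ‖toLp 2 (Uᵀ j)‖ = 1 := by
  simpa using norm_toLp_transpose_apply_eq_sqrt (hU.trans diagonal_one.symm) j

lemma l2_opNorm_le_one_of_norm_transpose_mul_self_le [DecidableEq n] {A : Matrix m n ℝ}
    (h : ‖Aᵀ * A‖ ≤ 1) : ‖A‖ ≤ 1 := by
  rw [← conjTranspose_eq_transpose_of_trivial, l2_opNorm_conjTranspose_mul_self] at h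
  nlinarith [norm_nonneg A]

lemma l2_opNorm_le_one_of_transpose_mul_self_eq_one [DecidableEq n] {U : Matrix m n ℝ}
    (hU : Uᵀ * U = 1) : ‖U‖ ≤ 1 :=
  l2_opNorm_le_one_of_norm_transpose_mul_self_le <| by
    rw [hU, ← diagonal_one, l2_opNorm_diagonal]
    exact (pi_norm_le_iff_of_nonneg zero_le_one).mpr fun _ => by simp

lemma l2_opNorm_mul_diagonal_mul_transpose_le [Fintype k] [DecidableEq n] [DecidableEq k]
    {U : Matrix m k ℝ} {V : Matrix n k ℝ} (hU : Uᵀ * U = 1) (hV : Vᵀ * V = 1) (d : k → ℝ) :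
    ‖U * diagonal d * Vᵀ‖ ≤ ‖d‖ := by
  calc ‖U * diagonal d * Vᵀ‖ ≤ ‖U‖ * ‖diagonal d‖ * ‖Vᵀ‖ :=
        (l2_opNorm_mul _ _).trans (by gcongr; exact l2_opNorm_mul _ _)
    _ ≤ 1 * ‖d‖ * 1 := by
        rw [l2_opNorm_diagonal, ← conjTranspose_eq_transpose_of_trivial, l2_opNorm_conjTranspose]
        gcongr
        exacts [l2_opNorm_le_one_of_transpose_mul_self_eq_one hU,
          l2_opNorm_le_one_of_transpose_mul_self_eq_one hV]
    _ = ‖d‖ := by ring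

end L2OpNorm

section NuclearNorm

open WithLp
open scoped Matrix.Norms.L2Operator

lemma unitaryGroup_mul_transpose {n : Type*} [Fintype n] [DecidableEq n]
    (u : unitaryGroup n ℝ) : (u : Matrix n n ℝ) * (u : Matrix n n ℝ)ᵀ = 1 := by
  simpa only [star_eq_conjTranspose, conjTranspose_eq_transpose_of_trivial] using
    Unitary.mul_star_self_of_mem u.2

lemma unitaryGroup_transpose_mul {n : Type*} [Fintype n] [DecidableEq n]
    (u : unitaryGroup n ℝ) : (u : Matrix n n ℝ)ᵀ * (u : Matrix n n ℝ) = 1 := by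
  simpa only [star_eq_conjTranspose, conjTranspose_eq_transpose_of_trivial] using
    Unitary.star_mul_self_of_mem u.2

lemma Matrix.IsHermitian.transpose_eigenvectorUnitary_mul_mul {n : Type*} [Fintype n]
    [DecidableEq n] {A : Matrix n n ℝ} (hA : A.IsHermitian) :
    (hA.eigenvectorUnitary : Matrix n n ℝ)ᵀ * A * hA.eigenvectorUnitary
      = diagonal hA.eigenvalues := by
  simpa [Unitary.conjStarAlgAut_apply, star_eq_conjTranspose] using
    hA.conjStarAlgAut_star_eigenvectorUnitary

lemma nuclearNorm_nonneg {m n : ℕ} (Z : Matrix (Fin m) (Fin n) ℝ) : 0 ≤ nuclearNorm Z :=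
  Finset.sum_nonneg fun _ _ => Real.sqrt_nonneg _

lemma exists_orthogonal_nuclearNorm_eq_sum_sqrt {m n : ℕ} (Z : Matrix (Fin m) (Fin n) ℝ) :
    ∃ (Q : Matrix (Fin n) (Fin n) ℝ) (s : Fin n → ℝ), Q * Qᵀ = 1 ∧ Qᵀ * Q = 1 ∧
      (Z * Q)ᵀ * (Z * Q) = diagonal s ∧ nuclearNorm Z = ∑ p, √(s p) := by
  have hH := isHermitian_conjTranspose_mul_self Z
  refine ⟨hH.eigenvectorUnitary, hH.eigenvalues, unitaryGroup_mul_transpose _,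
    unitaryGroup_transpose_mul _, ?_, rfl⟩
  rw [← hH.transpose_eigenvectorUnitary_mul_mul]
  simp only [conjTranspose_eq_transpose_of_trivial, transpose_mul, Matrix.mul_assoc]

theorem frobInner_le_l2_opNorm_mul_nuclearNorm {m n : ℕ} (W Z : Matrix (Fin m) (Fin n) ℝ) :
    frobInner W Z ≤ ‖W‖ * nuclearNorm Z := by
  obtain ⟨Q, s, hQ, hQ', hs, hZ⟩ := exists_orthogonal_nuclearNorm_eq_sum_sqrt Z
  rw [← frobInner_mul_of_mul_transpose_eq_one W Z hQ, frobInner_eq_sum_dotProduct, hZ,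
    Finset.mul_sum]
  refine Finset.sum_le_sum fun p _ => ?_
  calc (W * Q)ᵀ p ⬝ᵥ (Z * Q)ᵀ p ≤ ‖W‖ * ‖toLp 2 (Qᵀ p)‖ * ‖toLp 2 ((Z * Q)ᵀ p)‖ :=
        mulVec_dotProduct_le W (Qᵀ p) _
    _ = ‖W‖ * √(s p) := by
        rw [norm_toLp_transpose_apply_eq_one hQ',
          norm_toLp_transpose_apply_eq_sqrt hs, mul_one]

theorem exists_l2_opNorm_le_one_frobInner_eq_nuclearNorm {m n : ℕ}
    (Z : Matrix (Fin m) (Fin n) ℝ) : ∃ W, ‖W‖ ≤ 1 ∧ frobInner W Z = nuclearNorm Z := by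
  obtain ⟨Q, s, hQ, hQ', hs, hZ⟩ := exists_orthogonal_nuclearNorm_eq_sum_sqrt Z
  set f : Fin n → ℝ := fun p => (√(s p))⁻¹
  have hP : (Z * Q * diagonal f)ᵀ * (Z * Q * diagonal f)
      = diagonal fun p => f p * (s p * f p) := by
    rw [transpose_mul, diagonal_transpose, Matrix.mul_assoc, ← Matrix.mul_assoc _ (Z * Q),
      hs, diagonal_mul_diagonal, diagonal_mul_diagonal]
  -- `W` is the polar factor of `Z`; on the kernel of `Z` the junk value `(√0)⁻¹ = 0` kills it.
  refine ⟨Z * Q * diagonal f * Qᵀ, ?_, ?_⟩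
  · calc ‖Z * Q * diagonal f * Qᵀ‖ ≤ ‖Z * Q * diagonal f‖ * ‖Qᵀ‖ := l2_opNorm_mul _ _
      _ ≤ 1 * 1 := by
          gcongr
          · refine l2_opNorm_le_one_of_norm_transpose_mul_self_le ?_
            rw [hP, l2_opNorm_diagonal]
            refine (pi_norm_le_iff_of_nonneg zero_le_one).mpr fun p => ?_
            change ‖(√(s p))⁻¹ * (s p * (√(s p))⁻¹)‖ ≤ 1
            rw [← div_eq_mul_inv (s p), Real.div_sqrt]
            by_cases h : √(s p) = 0 <;> simp [h]
          · exact l2_opNorm_le_one_of_transpose_mul_self_eq_one (by rwa [transpose_transpose])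
      _ = 1 := one_mul 1
  · rw [hZ, ← frobInner_mul_of_mul_transpose_eq_one _ Z hQ, Matrix.mul_assoc _ Qᵀ Q, hQ',
      Matrix.mul_one, frobInner, transpose_mul, diagonal_transpose, Matrix.mul_assoc, hs,
      diagonal_mul_diagonal, trace_diagonal]
    exact Finset.sum_congr rfl fun p _ => by rw [inv_mul_eq_div, Real.div_sqrt]

end NuclearNorm

section SingularValueForm

open WithLp
open scoped Matrix.Norms.L2Operator

variable {m n k : Type*} [Fintype m] [Fintype n] [Fintype k] [DecidableEq k]
  {U : Matrix m k ℝ} {V : Matrix n k ℝ}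

theorem frobInner_mul_diagonal_mul_transpose_le [DecidableEq n] (W : Matrix m n ℝ)
    (hU : Uᵀ * U = 1) (hV : Vᵀ * V = 1) {d : k → ℝ} (hd : ∀ i, 0 ≤ d i) :
    frobInner W (U * diagonal d * Vᵀ) ≤ ‖W‖ * ∑ i, d i := by
  have h : frobInner W (U * diagonal d * Vᵀ) = ∑ j, d j * ((W *ᵥ Vᵀ j) ⬝ᵥ Uᵀ j) := by
    rw [frobInner, ← Matrix.mul_assoc, ← Matrix.mul_assoc, trace_mul_comm, ← Matrix.mul_assoc,
      ← Matrix.mul_assoc, ← transpose_mul]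
    simp only [trace, diag, mul_diagonal]
    exact Finset.sum_congr rfl fun j _ => mul_comm _ _
  rw [h, Finset.mul_sum]
  refine Finset.sum_le_sum fun j _ => ?_
  calc d j * ((W *ᵥ Vᵀ j) ⬝ᵥ Uᵀ j) ≤ d j * (‖W‖ * ‖toLp 2 (Vᵀ j)‖ * ‖toLp 2 (Uᵀ j)‖) :=
        mul_le_mul_of_nonneg_left (mulVec_dotProduct_le W _ _) (hd j)
    _ = ‖W‖ * d j := by
        rw [norm_toLp_transpose_apply_eq_one hU, norm_toLp_transpose_apply_eq_one hV]
        ring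

lemma frobInner_mul_diagonal_mul_transpose (hU : Uᵀ * U = 1) (hV : Vᵀ * V = 1) (c e : k → ℝ) :
    frobInner (U * diagonal c * Vᵀ) (U * diagonal e * Vᵀ) = ∑ i, c i * e i := by
  have h : (U * diagonal c * Vᵀ)ᵀ * (U * diagonal e * Vᵀ) = V * (diagonal (c * e) * Vᵀ) := by
    simp only [transpose_mul, transpose_transpose, diagonal_transpose, Matrix.mul_assoc]
    rw [← Matrix.mul_assoc Uᵀ, hU, Matrix.one_mul, ← Matrix.mul_assoc (diagonal c),
      diagonal_mul_diagonal]
    rfl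
  rw [frobInner, h, ← Matrix.mul_assoc, trace_mul_cycle, hV, Matrix.one_mul, trace_diagonal]
  rfl

end SingularValueForm

section NuclearNormSubgradient

open scoped Matrix.Norms.L2Operator

variable {m n : ℕ} {k : Type*} [Fintype k] [DecidableEq k]
  {U : Matrix (Fin m) k ℝ} {V : Matrix (Fin n) k ℝ}

theorem nuclearNorm_mul_diagonal_mul_transpose_le (hU : Uᵀ * U = 1) (hV : Vᵀ * V = 1)
    {d : k → ℝ} (hd : ∀ i, 0 ≤ d i) : nuclearNorm (U * diagonal d * Vᵀ) ≤ ∑ i, d i := by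
  obtain ⟨W, hW, hWD⟩ := exists_l2_opNorm_le_one_frobInner_eq_nuclearNorm (U * diagonal d * Vᵀ)
  calc nuclearNorm (U * diagonal d * Vᵀ) = frobInner W (U * diagonal d * Vᵀ) := hWD.symm
    _ ≤ ‖W‖ * ∑ i, d i := frobInner_mul_diagonal_mul_transpose_le W hU hV hd
    _ ≤ 1 * ∑ i, d i := by gcongr; exact Finset.sum_nonneg fun i _ => hd i
    _ = ∑ i, d i := one_mul _

theorem frobInner_sub_le_mul_nuclearNorm_sub (hU : Uᵀ * U = 1) (hV : Vᵀ * V = 1)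
    {μ d : k → ℝ} {τ : ℝ} (hτ : 0 ≤ τ) (hμ : ∀ i, |μ i| ≤ τ) (hd : ∀ i, 0 ≤ d i)
    (hμd : ∀ i, μ i * d i = τ * d i) (Z : Matrix (Fin m) (Fin n) ℝ) :
    frobInner (U * diagonal μ * Vᵀ) (Z - U * diagonal d * Vᵀ)
      ≤ τ * nuclearNorm Z - τ * nuclearNorm (U * diagonal d * Vᵀ) := by
  have hW : ‖U * diagonal μ * Vᵀ‖ ≤ τ :=
    (l2_opNorm_mul_diagonal_mul_transpose_le hU hV μ).trans <|
      (pi_norm_le_iff_of_nonneg hτ).mpr fun i => (Real.norm_eq_abs _).trans_le (hμ i)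
  have hWZ : frobInner (U * diagonal μ * Vᵀ) Z ≤ τ * nuclearNorm Z :=
    (frobInner_le_l2_opNorm_mul_nuclearNorm _ Z).trans <|
      mul_le_mul_of_nonneg_right hW (nuclearNorm_nonneg Z)
  have hWD : frobInner (U * diagonal μ * Vᵀ) (U * diagonal d * Vᵀ) = τ * ∑ i, d i := by
    rw [frobInner_mul_diagonal_mul_transpose hU hV, Finset.mul_sum]
    exact Finset.sum_congr rfl fun i _ => hμd i
  have hD := mul_le_mul_of_nonneg_left (nuclearNorm_mul_diagonal_mul_transpose_le hU hV hd) hτ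
  rw [frobInner_sub_right, hWD]
  linarith

end NuclearNormSubgradient

theorem svt_is_unique_prox_of_nuclear_norm_general
    (n₁ n₂ k : ℕ) (Y : Matrix (Fin n₁) (Fin n₂) ℝ)
    (U : Matrix (Fin n₁) (Fin k) ℝ) (V : Matrix (Fin n₂) (Fin k) ℝ) (σ : Fin k → ℝ) (τ : ℝ)
    (hτ : 0 < τ)
    -- SVD of Y: U, V have orthonormal columns, σ nonnegative and nonincreasing
    (hY : Y = U * Matrix.diagonal σ * Vᵀ) (hU : Uᵀ * U = 1) (hV : Vᵀ * V = 1)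
    (hσ : ∀ i, 0 ≤ σ i) :
    let D : Matrix (Fin n₁) (Fin n₂) ℝ :=
      U * Matrix.diagonal (fun i => if τ ≤ σ i then σ i - τ else 0) * Vᵀ
    ∀ Z : Matrix (Fin n₁) (Fin n₂) ℝ, Z ≠ D →
      (1 / 2) * (frobNorm (Y - D)) ^ 2 + τ * nuclearNorm D
        < (1 / 2) * (frobNorm (Y - Z)) ^ 2 + τ * nuclearNorm Z := by
  intro D Z hZ
  set σ' : Fin k → ℝ := fun i => if τ ≤ σ i then σ i - τ else 0
  have hYD : Y - D = U * diagonal (fun i => σ i - σ' i) * Vᵀ := by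
    rw [hY, ← diagonal_sub, Matrix.mul_sub, Matrix.sub_mul]
  refine half_frobNorm_sq_add_lt ?_ hZ
  rw [hYD]
  refine frobInner_sub_le_mul_nuclearNorm_sub hU hV hτ.le (fun i => abs_le.mpr ?_)
    (fun i => ?_) (fun i => ?_) Z
  · simp only [σ']
    split_ifs <;> constructor <;> linarith [hσ i]
  · split_ifs <;> linarith
  · simp only [σ']
    split_ifs <;> ring

/-- the singular value thresholding operator `D_τ(Y) = U Σ' Vᵀ`, with
`σ'_k = σ_k - τ` if `σ_k ≥ τ` and `σ'_k = 0` otherwise, is the unique minimizer of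
`Z ↦ (1/2)‖Y - Z‖_F² + τ‖Z‖_*`. -/
theorem svt_is_unique_prox_of_nuclear_norm
    (n₁ n₂ k : ℕ) (Y : Matrix (Fin n₁) (Fin n₂) ℝ)
    (U : Matrix (Fin n₁) (Fin k) ℝ) (V : Matrix (Fin n₂) (Fin k) ℝ) (σ : Fin k → ℝ) (τ : ℝ)
    (hτ : 0 < τ)
    -- SVD of Y: U, V have orthonormal columns, σ nonnegative and nonincreasing
    (hY : Y = U * Matrix.diagonal σ * Vᵀ) (hU : Uᵀ * U = 1) (hV : Vᵀ * V = 1)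
    (hσ : ∀ i, 0 ≤ σ i) (hmono : ∀ i j : Fin k, i ≤ j → σ j ≤ σ i) :
    let D : Matrix (Fin n₁) (Fin n₂) ℝ :=
      U * Matrix.diagonal (fun i => if τ ≤ σ i then σ i - τ else 0) * Vᵀ
    ∀ Z : Matrix (Fin n₁) (Fin n₂) ℝ, Z ≠ D →
      (1 / 2) * (frobNorm (Y - D)) ^ 2 + τ * nuclearNorm D
        < (1 / 2) * (frobNorm (Y - Z)) ^ 2 + τ * nuclearNorm Z :=
  svt_is_unique_prox_of_nuclear_norm_general n₁ n₂ k Y U V σ τ hτ hY hU hV hσ
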